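/- arXiv:2208.04599 — 4 statements merged into one kernel-verified Lean document; each statement's English description precedes it below -/
import Mathlib

section
/- For any Schwartz function φ on ℝ, the sum over j ≥ 0 of φ(2π(2j+1)) equals (i/2)·(1/(2π))·⟨1/sin(2π(t+i0)), φ̂(t)⟩, where φ̂ is the Fourier transform φ̂(k)=∫φ(λ)e^{-ikλ}dλ and the distribution 1/sin(c(t+i0)) is defined as the limit as ε→0+ of ∫ φ̂(t)/sin(c(t+iε)) dt. -/
/-!
For `Im z > 0` the geometric series in `e^{2iz}` gives `1 / sin z = -2i ∑_{k ≥ 0} e^{i(2k+1)z}`.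
Integrating `φ̂` against `e^{ia(t+iε)} = e^{-aε} e^{iat}` gives `2π e^{-aε} φ(a)` by Fourier
inversion, so for `ε > 0` the regularized pairing is `-4πi ∑ e^{-(2k+1)cε} φ((2k+1)c)`. The series
`∑ φ((2k+1)c)` converges absolutely by Schwartz decay, and dominated convergence lets `ε → 0⁺`.
-/

open MeasureTheory Filter Topology Real

noncomputable def fourierT (φ : SchwartzMap ℝ ℂ) (k : ℝ) : ℂ :=
  ∫ l : ℝ, φ l * Complex.exp (-(Complex.I * k * l))

open Complex FourierTransform
open scoped SchwartzMap

theorem Complex.inv_sin_eq_tsum {z : ℂ} (hz : 0 < z.im) :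
    (sin z)⁻¹ = -2 * I * ∑' k : ℕ, exp ((2 * k + 1) * z * I) := by
  have hw : ‖exp (z * I) ^ 2‖ < 1 := by
    rw [norm_pow, norm_exp]
    exact pow_lt_one₀ (Real.exp_nonneg _) (by simpa using hz) two_ne_zero
  have hterm (k : ℕ) : exp ((2 * k + 1) * z * I) = exp (z * I) * (exp (z * I) ^ 2) ^ k := by
    rw [← pow_mul, ← pow_succ', ← exp_nat_mul]
    push_cast
    ring_nf
  rw [tsum_congr hterm, tsum_mul_left, tsum_geometric_of_norm_lt_one hw, sin,
    show -z * I = -(z * I) by ring, exp_neg]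
  have hw0 := exp_ne_zero (z * I)
  generalize exp (z * I) = w at hw hw0 ⊢
  have hw1 : 1 - w ^ 2 ≠ 0 := fun h => by simp [← sub_eq_zero.1 h] at hw
  field_simp
  linear_combination I_sq

theorem fourierT_eq_fourier (φ : 𝓢(ℝ, ℂ)) (k : ℝ) : fourierT φ k = 𝓕 φ (k / (2 * π)) := by
  rw [SchwartzMap.fourier_coe, Real.fourier_real_eq_integral_exp_smul, fourierT]
  congr 1 with v
  rw [smul_eq_mul, mul_comm]
  congr 2
  push_cast
  field_simp

theorem integrable_fourierT (φ : 𝓢(ℝ, ℂ)) : Integrable (fourierT φ) := by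
  rw [funext (fourierT_eq_fourier φ)]
  exact (𝓕 φ).integrable.comp_div two_pi_pos.ne'

theorem integral_fourierT_mul_exp (φ : 𝓢(ℝ, ℂ)) (a : ℝ) :
    ∫ t, fourierT φ t * exp (I * a * t) = 2 * π * φ a := by
  set g : ℝ → ℂ := fun s => exp (↑(2 * π * (a * s)) * I) • 𝓕 φ s
  have h (t : ℝ) : fourierT φ t * exp (I * a * t) = g (t / (2 * π)) := by
    rw [fourierT_eq_fourier, mul_comm]
    simp only [g, smul_eq_mul]
    congr 2
    push_cast
    field_simp
  rw [funext h, Measure.integral_comp_div g, abs_of_pos two_pi_pos]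
  conv_rhs =>
    rw [← fourierInv_fourier_eq (F := 𝓢(ℝ, ℂ)) φ, SchwartzMap.fourierInv_coe, Real.fourierInv_eq']
  simp [g, Complex.real_smul]

theorem Complex.exp_I_mul_mul_add_I_mul (a t ε : ℝ) :
    exp (I * a * (t + I * ε)) = Real.exp (-(ε * a)) * exp (I * a * t) := by
  rw [ofReal_exp, ← Complex.exp_add]
  congr 1
  push_cast
  linear_combination a * ε * I_sq

theorem integral_fourierT_mul_exp_I_mul_mul_add_I_mul (φ : 𝓢(ℝ, ℂ)) (a ε : ℝ) :
    ∫ t, fourierT φ t * exp (I * a * (t + I * ε)) = Real.exp (-(ε * a)) * (2 * π * φ a) := by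
  simp_rw [Complex.exp_I_mul_mul_add_I_mul, mul_left_comm (fourierT φ _)]
  rw [integral_const_mul, integral_fourierT_mul_exp]

theorem tendsto_tsum_exp_neg_mul_smul {β E : Type*} [NormedAddCommGroup E] [NormedSpace ℝ E]
    [CompleteSpace E] {s : β → ℝ} (hs : ∀ k, 0 ≤ s k) {f : β → E}
    (hf : Summable fun k => ‖f k‖) :
    Tendsto (fun ε : ℝ => ∑' k, Real.exp (-(ε * s k)) • f k) (𝓝[>] 0) (𝓝 (∑' k, f k)) := by
  refine tendsto_tsum_of_dominated_convergence hf (fun k => ?_) ?_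
  · have h : Continuous fun ε : ℝ => Real.exp (-(ε * s k)) • f k := by fun_prop
    simpa using (h.tendsto 0).mono_left nhdsWithin_le_nhds
  · filter_upwards [self_mem_nhdsWithin] with ε (hε : 0 < ε) k
    rw [norm_smul, Real.norm_of_nonneg (Real.exp_pos _).le]
    exact mul_le_of_le_one_left (norm_nonneg _)
      (Real.exp_le_one_iff.2 (neg_nonpos.2 (mul_nonneg hε.le (hs k))))

theorem SchwartzMap.summable_norm_comp {E F : Type*} [NormedAddCommGroup E] [NormedSpace ℝ E]
    [NormedAddCommGroup F] [NormedSpace ℝ F] (φ : 𝓢(E, F)) {x : ℕ → E} {c : ℝ} (hc : 0 < c)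
    (hx : ∀ k, c * (k + 1) ≤ ‖x k‖) : Summable fun k => ‖φ (x k)‖ := by
  set C := SchwartzMap.seminorm ℝ 2 0 φ
  have hsum : Summable fun k : ℕ => C / c ^ 2 * (1 / ((k + 1 : ℕ) : ℝ) ^ 2) :=
    ((summable_nat_add_iff 1).2 (Real.summable_one_div_nat_pow.2 one_lt_two)).mul_left _
  refine Summable.of_nonneg_of_le (fun k => norm_nonneg _) (fun k => ?_) hsum
  have hk : 0 < c * (k + 1) := by positivity
  have hxk : 0 < ‖x k‖ := hk.trans_le (hx k)
  calc ‖φ (x k)‖ ≤ C / ‖x k‖ ^ 2 := by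
        rw [le_div_iff₀ (by positivity), mul_comm]
        exact φ.norm_pow_mul_le_seminorm ℝ 2 (x k)
    _ ≤ C / (c * (k + 1)) ^ 2 := by gcongr; exact hx k
    _ = _ := by push_cast; field_simp

theorem integral_fourierT_div_sin (φ : 𝓢(ℝ, ℂ)) {c ε : ℝ} (hc : 0 < c) (hε : 0 < ε) :
    ∫ t, fourierT φ t / sin (c * (t + I * ε))
      = -4 * π * I * ∑' k : ℕ, Real.exp (-(ε * (c * (2 * k + 1)))) • φ (c * (2 * k + 1)) := by
  set F : ℕ → ℝ → ℂ := fun k t => fourierT φ t * exp (I * ↑(c * (2 * k + 1)) * (t + I * ε))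
  have hexpand (t : ℝ) : fourierT φ t / sin (c * (t + I * ε)) = -2 * I * ∑' k, F k t := by
    have him : 0 < (c * (t + I * ε) : ℂ).im := by simpa using mul_pos hc hε
    simp_rw [div_eq_mul_inv, inv_sin_eq_tsum him, ← tsum_mul_left]
    exact tsum_congr fun k => by simp only [F]; push_cast; ring_nf
  have hnorm (k : ℕ) (t : ℝ) : ‖F k t‖ = Real.exp (-(ε * (c * (2 * k + 1)))) * ‖fourierT φ t‖ := by
    rw [norm_mul, Complex.exp_I_mul_mul_add_I_mul, norm_mul, mul_assoc I, ← ofReal_mul,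
      norm_exp_I_mul_ofReal, mul_one, norm_real,
      Real.norm_of_nonneg (Real.exp_pos _).le, mul_comm]
  have hint (k : ℕ) : Integrable (F k) :=
    ((integrable_fourierT φ).norm.const_mul (Real.exp (-(ε * (c * (2 * k + 1)))))).mono'
      ((integrable_fourierT φ).aestronglyMeasurable.mul
        (by fun_prop : Continuous _).aestronglyMeasurable)
      (ae_of_all _ fun t => (hnorm k t).le)
  have hsum : Summable fun k => ∫ t, ‖F k t‖ := by
    simp_rw [hnorm, integral_const_mul]
    refine Summable.mul_right _ ?_
    simpa only [neg_mul, mul_assoc] using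
      Real.summable_exp_nat_mul_of_ge (c := -(ε * c)) (by nlinarith) (f := fun k => 2 * k + 1)
        (fun k => by linarith)
  simp_rw [hexpand, integral_const_mul, ← integral_tsum_of_summable_integral_norm hint hsum, F,
    integral_fourierT_mul_exp_I_mul_mul_add_I_mul, Complex.real_smul]
  rw [← tsum_mul_left, ← tsum_mul_left]
  exact tsum_congr fun k => by ring

theorem tendsto_integral_fourierT_div_sin (φ : 𝓢(ℝ, ℂ)) {c : ℝ} (hc : 0 < c) :
    Tendsto (fun ε : ℝ => ∫ t, fourierT φ t / sin (c * (t + I * ε))) (𝓝[>] 0)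
      (𝓝 (-4 * π * I * ∑' k : ℕ, φ (c * (2 * k + 1)))) := by
  have hφ : Summable fun k : ℕ => ‖φ (c * (2 * k + 1))‖ :=
    φ.summable_norm_comp hc fun k => by
      rw [Real.norm_of_nonneg (by positivity)]
      nlinarith [(k.cast_nonneg : (0 : ℝ) ≤ k)]
  have hs (k : ℕ) : 0 ≤ c * (2 * k + 1) := by positivity
  refine ((tendsto_tsum_exp_neg_mul_smul hs hφ).const_mul _).congr' ?_
  filter_upwards [self_mem_nhdsWithin] with ε hε
  exact (integral_fourierT_div_sin φ hc hε).symm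

/-- `Σ_{j≥0} φ(2π(2j+1)) = (i/2)·(1/(2π))·⟨1/sin(2π(t+i0)), φ̂⟩`,
where the pairing is the limit as `ε → 0⁺` of `∫ φ̂(t)/sin(2π(t+iε)) dt`. -/
theorem stmt0 (φ : SchwartzMap ℝ ℂ) :
    Tendsto
      (fun ε : ℝ =>
        (Complex.I / 2) * (1 / (2 * (π : ℂ))) *
          ∫ t : ℝ, fourierT φ t / Complex.sin (2 * (π : ℂ) * ((t : ℂ) + Complex.I * ε)))
      (𝓝[>] (0 : ℝ))
      (𝓝 (∑' j : ℕ, φ (2 * π * (2 * (j : ℝ) + 1)))) := by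
  have hconst : I / 2 * (1 / (2 * π)) * (-4 * π * I) = 1 := by
    field_simp
    linear_combination -4 * I_sq
  have h := (tendsto_integral_fourierT_div_sin φ two_pi_pos).const_mul (I / 2 * (1 / (2 * π)))
  push_cast at h
  rwa [← mul_assoc, hconst, one_mul] at h
end

section
/- Let ν_{N,j} = (1/R²)[j(j+1) + (N/2)(2j+1)] with multiplicity m_{N,j} = N+2j+1 (the spectrum of the magnetic Laplacian on the round sphere of radius R with magnetic field F = (1/2)sinθ dθ∧dφ). Then Y_N(φ) = Σ_{j=0}^∞ (N+2j+1) φ(ν_{N,j}/N) admits an asymptotic expansion Y_N(φ) ∼ Σ_{l=0}^∞ f_l(φ) N^{1-l} as N→∞ for every Schwartz function φ, with leading coefficient f_0(φ) = Σ_{j=0}^∞ φ((2j+1)/(2R²)). -/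
/-!
Write `ν_{N,j} / N = a_j + d_j / N` with the Landau level `a_j = (2j+1)/(2R²)` and
`d_j = j(j+1)/R²`. Expanding `φ` by Taylor's formula at `a_j` in powers of `d_j / N` and
multiplying by the multiplicity `N + 2j + 1` gives, term by term in `j`, the coefficients
`f_l = ∑_j (d_j^l φ^{(l)}(a_j) / l! + (2j+1) d_j^{l-1} φ^{(l-1)}(a_j) / (l-1)!)`
(without the second term for `l = 0`).
The `j`-th Taylor remainder of order `m` is at most `d_j^m sup_{t ≥ a_j} |φ^{(m)}(t)| N^{-m}`;
since `a_j` grows linearly and `d_j` quadratically in `j`, the rapid decay of `φ^{(m)}` makes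
this `O((j+1)^{-3} N^{-m})`, which is summable in `j` uniformly in `N`.
-/

open Real

noncomputable def Ysphere (R : ℝ) (φ : SchwartzMap ℝ ℂ) (N : ℕ) : ℂ :=
  ∑' j : ℕ, ((N : ℂ) + 2 * (j : ℂ) + 1) *
    φ ((1 / R ^ 2) * ((j : ℝ) * ((j : ℝ) + 1) / N + (2 * (j : ℝ) + 1) / 2))

open Finset

section Taylor

variable {E : Type*} [NormedAddCommGroup E] [NormedSpace ℝ E]

theorem norm_sub_sum_iteratedDeriv_le {f : ℝ → E} {n : ℕ} (hf : ContDiff ℝ n f) {a h C : ℝ}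
    (hh : 0 < h) (hC : ∀ t ∈ Set.Icc a (a + h), ‖iteratedDeriv n f t‖ ≤ C) :
    ‖f (a + h) - ∑ k ∈ range n, (h ^ k / k.factorial) • iteratedDeriv k f a‖ ≤ C * h ^ n := by
  have hmem : a + h ∈ Set.Icc a (a + h) := ⟨by linarith, le_rfl⟩
  rcases n with _ | n
  · simpa using hC _ hmem
  have hud : UniqueDiffOn ℝ (Set.Icc a (a + h)) := uniqueDiffOn_Icc (by linarith)
  have hwithin : ∀ k ≤ n + 1, ∀ t ∈ Set.Icc a (a + h),
      iteratedDerivWithin k f (Set.Icc a (a + h)) t = iteratedDeriv k f t := fun k hk t ht =>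
    iteratedDerivWithin_eq_iteratedDeriv hud ((hf.of_le (by exact_mod_cast hk)).contDiffAt) ht
  have H := taylor_mean_remainder_bound (by linarith) hf.contDiffOn hmem
    fun t ht => (hwithin (n + 1) le_rfl t ht).symm ▸ hC t ht
  rw [taylor_within_apply, add_sub_cancel_left] at H
  have hC0 : 0 ≤ C := (norm_nonneg _).trans (hC a ⟨le_rfl, by linarith⟩)
  calc _ = ‖f (a + h) - ∑ k ∈ range (n + 1),
        ((k.factorial : ℝ)⁻¹ * h ^ k) • iteratedDerivWithin k f (Set.Icc a (a + h)) a‖ := by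
        congr 2
        refine sum_congr rfl fun k hk => ?_
        have hk' : k ≤ n + 1 := by rw [Finset.mem_range] at hk; omega
        rw [hwithin k hk' a ⟨le_rfl, by linarith⟩, div_eq_inv_mul]
    _ ≤ C * h ^ (n + 1) / n.factorial := H
    _ ≤ C * h ^ (n + 1) := div_le_self (by positivity) (by exact_mod_cast n.factorial_pos)

theorem norm_sub_sum_iteratedDeriv_le_of_pow_mul_le {f : ℝ → E} {n : ℕ} (hf : ContDiff ℝ n f)
    {a h C : ℝ} (hh : 0 ≤ h) (hC : ∀ t ∈ Set.Icc a (a + h), h ^ n * ‖iteratedDeriv n f t‖ ≤ C) :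
    ‖f (a + h) - ∑ k ∈ range n, (h ^ k / k.factorial) • iteratedDeriv k f a‖ ≤ C := by
  rcases hh.eq_or_lt with rfl | hh
  · have hC0 := hC a (by simp)
    rcases n with _ | n
    · simpa using hC0
    · simpa [sum_range_succ'] using hC0
  · calc _ ≤ C / h ^ n * h ^ n := norm_sub_sum_iteratedDeriv_le hf hh fun t ht =>
          (le_div_iff₀' (by positivity)).2 (hC t ht)
      _ = C := div_mul_cancel₀ _ (by positivity)

end Taylor

-- `w` is the coefficient sequence of the power series `(1 + c X) * ∑ u_k X^k`.
theorem sum_range_succ_coeff_mul_pow {K : Type*} [CommRing K] (u w : ℕ → K) (c x : K)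
    (hw₀ : w 0 = u 0) (hw : ∀ l, w (l + 1) = u (l + 1) + c * u l) (m : ℕ) :
    ∑ l ∈ range (m + 1), w l * x ^ l =
      ∑ k ∈ range (m + 1), u k * x ^ k + c * x * ∑ k ∈ range m, u k * x ^ k := by
  simp only [sum_range_succ' _ m, hw, hw₀, add_mul, sum_add_distrib, mul_sum]
  rw [add_right_comm]
  congr 1
  exact sum_congr rfl fun k _ => by ring

theorem summable_div_natCast_add_one_sq (C : ℝ) : Summable fun j : ℕ => C / ((j : ℝ) + 1) ^ 2 := by
  have : Summable fun j : ℕ => (((j : ℝ) + 1) ^ 2)⁻¹ := by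
    exact_mod_cast (summable_nat_add_iff 1).mpr (Real.summable_nat_pow_inv.mpr one_lt_two)
  simpa [div_eq_mul_inv] using this.mul_left C

theorem summable_of_norm_le_div_sq {E : Type*} [NormedAddCommGroup E] [CompleteSpace E]
    {g : ℕ → E} {C : ℝ} (h : ∀ j : ℕ, ‖g j‖ ≤ C / ((j : ℝ) + 1) ^ 2) : Summable g :=
  .of_norm_bounded (summable_div_natCast_add_one_sq C) h

theorem norm_tsum_sub_tsum_le {E : Type*} [NormedAddCommGroup E] [CompleteSpace E]
    {f g : ℕ → E} {b : ℕ → ℝ} (hg : Summable g) (hb : Summable b)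
    (h : ∀ j, ‖f j - g j‖ ≤ b j) : ‖∑' j, f j - ∑' j, g j‖ ≤ ∑' j, b j := by
  have hfg : Summable (fun j => f j - g j) := .of_norm_bounded hb h
  have hf : Summable f := by simpa using hfg.add hg
  rw [← hf.tsum_sub hg]
  exact tsum_of_norm_bounded hb.hasSum h

theorem two_mul_add_one_mul_div_pow_succ_le {C : ℝ} (hC : 0 ≤ C) (j q : ℕ) :
    (2 * (j : ℝ) + 1) * (C / ((j : ℝ) + 1) ^ (q + 1)) ≤ 2 * C / ((j : ℝ) + 1) ^ q := by
  rw [pow_succ, mul_div_assoc', div_le_div_iff₀ (by positivity) (by positivity)]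
  have : (2 * (j : ℝ) + 1) ≤ 2 * ((j : ℝ) + 1) := by linarith
  calc (2 * (j : ℝ) + 1) * C * ((j : ℝ) + 1) ^ q
      ≤ 2 * ((j : ℝ) + 1) * C * ((j : ℝ) + 1) ^ q := by gcongr
    _ = _ := by ring

namespace MagneticSphere

noncomputable section

variable (R : ℝ) (φ : SchwartzMap ℝ ℂ)

def landauLevel (j : ℕ) : ℝ := (2 * (j : ℝ) + 1) / (2 * R ^ 2)

def levelShift (j : ℕ) : ℝ := (j : ℝ) * ((j : ℝ) + 1) / R ^ 2

def taylorCoeff (k j : ℕ) : ℂ :=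
  (levelShift R j ^ k / k.factorial : ℝ) • iteratedDeriv k φ (landauLevel R j)

def expansionTerm : ℕ → ℕ → ℂ
  | 0, j => taylorCoeff R φ 0 j
  | l + 1, j => taylorCoeff R φ (l + 1) j + (2 * (j : ℂ) + 1) * taylorCoeff R φ l j

def expansionCoeff (l : ℕ) : ℂ := ∑' j, expansionTerm R φ l j

theorem expansionCoeff_zero :
    expansionCoeff R φ 0 = ∑' j : ℕ, φ ((2 * (j : ℝ) + 1) / (2 * R ^ 2)) := by
  simp [expansionCoeff, expansionTerm, taylorCoeff, landauLevel]

variable {R}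

theorem eigenvalue_div_eq (N j : ℕ) :
    (1 / R ^ 2) * ((j : ℝ) * ((j : ℝ) + 1) / N + (2 * (j : ℝ) + 1) / 2) =
      landauLevel R j + levelShift R j / N := by
  simp only [landauLevel, levelShift]
  ring

theorem levelShift_nonneg (j : ℕ) : 0 ≤ levelShift R j := by
  unfold levelShift; positivity

theorem levelShift_le (j : ℕ) : levelShift R j ≤ ((j : ℝ) + 1) ^ 2 / R ^ 2 := by
  unfold levelShift
  gcongr
  nlinarith

theorem le_landauLevel (hR : 0 < R) (j : ℕ) : ((j : ℝ) + 1) / (2 * R ^ 2) ≤ landauLevel R j := by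
  unfold landauLevel
  gcongr
  linarith

theorem exists_levelShift_pow_mul_norm_iteratedDeriv_le (hR : 0 < R) (m q : ℕ) :
    ∃ C, 0 ≤ C ∧ ∀ (j : ℕ) (t : ℝ), landauLevel R j ≤ t →
      levelShift R j ^ m * ‖iteratedDeriv m φ t‖ ≤ C / ((j : ℝ) + 1) ^ q := by
  set p := 2 * m + q
  refine ⟨(2 * R ^ 2) ^ p * SchwartzMap.seminorm ℝ p m φ / R ^ (2 * m), by positivity,
    fun j t ht => ?_⟩
  set P : ℝ := (j : ℝ) + 1
  have hP : 0 < P := by positivity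
  have hPt : P ≤ 2 * R ^ 2 * t := by
    have := (le_landauLevel hR j).trans ht
    rwa [div_le_iff₀' (by positivity)] at this
  have ht0 : 0 ≤ t := by nlinarith
  have hdecay : t ^ p * ‖iteratedDeriv m φ t‖ ≤ SchwartzMap.seminorm ℝ p m φ := by
    simpa [abs_of_nonneg ht0] using SchwartzMap.le_seminorm' ℝ p m φ t
  rw [le_div_iff₀ (by positivity), le_div_iff₀ (by positivity)]
  calc levelShift R j ^ m * ‖iteratedDeriv m φ t‖ * P ^ q * R ^ (2 * m)
      ≤ (P ^ 2 / R ^ 2) ^ m * ‖iteratedDeriv m φ t‖ * P ^ q * R ^ (2 * m) := by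
        gcongr
        · exact levelShift_nonneg j
        · exact levelShift_le j
    _ = P ^ p * ‖iteratedDeriv m φ t‖ := by
        rw [div_pow, ← pow_mul, ← pow_mul]; field_simp; ring
    _ ≤ (2 * R ^ 2 * t) ^ p * ‖iteratedDeriv m φ t‖ := by gcongr
    _ = (2 * R ^ 2) ^ p * (t ^ p * ‖iteratedDeriv m φ t‖) := by ring
    _ ≤ (2 * R ^ 2) ^ p * SchwartzMap.seminorm ℝ p m φ := by gcongr

theorem exists_norm_taylorCoeff_le (hR : 0 < R) (k q : ℕ) :
    ∃ C, 0 ≤ C ∧ ∀ j : ℕ, ‖taylorCoeff R φ k j‖ ≤ C / ((j : ℝ) + 1) ^ q := by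
  obtain ⟨C, hC0, hC⟩ := exists_levelShift_pow_mul_norm_iteratedDeriv_le φ hR k q
  refine ⟨C, hC0, fun j => (le_trans ?_ (hC j _ le_rfl))⟩
  rw [taylorCoeff, norm_smul,
    Real.norm_of_nonneg (div_nonneg (pow_nonneg (levelShift_nonneg j) k) k.factorial.cast_nonneg)]
  gcongr
  exact div_le_self (pow_nonneg (levelShift_nonneg j) k) (by exact_mod_cast k.factorial_pos)

theorem exists_norm_expansionTerm_le (hR : 0 < R) (l : ℕ) :
    ∃ C, ∀ j : ℕ, ‖expansionTerm R φ l j‖ ≤ C / ((j : ℝ) + 1) ^ 2 := by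
  cases l with
  | zero =>
    obtain ⟨C, -, hC⟩ := exists_norm_taylorCoeff_le φ hR 0 2
    exact ⟨C, hC⟩
  | succ l =>
    obtain ⟨C₁, -, hC₁⟩ := exists_norm_taylorCoeff_le φ hR (l + 1) 2
    obtain ⟨C₂, hC₂0, hC₂⟩ := exists_norm_taylorCoeff_le φ hR l 3
    refine ⟨C₁ + 2 * C₂, fun j => ?_⟩
    calc ‖expansionTerm R φ (l + 1) j‖
        ≤ ‖taylorCoeff R φ (l + 1) j‖ + (2 * (j : ℝ) + 1) * ‖taylorCoeff R φ l j‖ := by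
          refine (norm_add_le _ _).trans_eq ?_
          rw [norm_mul]
          norm_cast
      _ ≤ C₁ / ((j : ℝ) + 1) ^ 2 + 2 * C₂ / ((j : ℝ) + 1) ^ 2 := by
          gcongr
          · exact hC₁ j
          · exact (mul_le_mul_of_nonneg_left (hC₂ j) (by positivity)).trans
              (two_mul_add_one_mul_div_pow_succ_le hC₂0 j 2)
      _ = (C₁ + 2 * C₂) / ((j : ℝ) + 1) ^ 2 := by ring

theorem summable_expansionTerm (hR : 0 < R) (l : ℕ) : Summable (expansionTerm R φ l) :=
  let ⟨_, hC⟩ := exists_norm_expansionTerm_le φ hR l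
  summable_of_norm_le_div_sq hC

theorem taylorCoeff_mul_inv_pow (N k j : ℕ) :
    taylorCoeff R φ k j * ((N : ℂ)⁻¹) ^ k =
      ((levelShift R j / N) ^ k / k.factorial : ℝ) • iteratedDeriv k φ (landauLevel R j) := by
  simp only [taylorCoeff, Complex.real_smul]
  push_cast
  ring

theorem exists_norm_sub_sum_taylorCoeff_le (hR : 0 < R) (m : ℕ) :
    ∃ C, 0 ≤ C ∧ ∀ N : ℕ, 0 < N → ∀ j : ℕ,
      ‖φ (landauLevel R j + levelShift R j / N) -
          ∑ k ∈ range m, taylorCoeff R φ k j * ((N : ℂ)⁻¹) ^ k‖ ≤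
        C / ((j : ℝ) + 1) ^ 3 / (N : ℝ) ^ m := by
  obtain ⟨C, hC0, hC⟩ := exists_levelShift_pow_mul_norm_iteratedDeriv_le φ hR m 3
  refine ⟨C, hC0, fun N hN j => ?_⟩
  simp only [taylorCoeff_mul_inv_pow]
  refine norm_sub_sum_iteratedDeriv_le_of_pow_mul_le (φ.smooth m)
    (div_nonneg (levelShift_nonneg j) N.cast_nonneg) fun t ht => ?_
  rw [div_pow, div_mul_eq_mul_div]
  gcongr
  exact hC j t ht.1

theorem sum_expansionTerm_mul (j M : ℕ) {N : ℂ} (hN : N ≠ 0) :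
    ∑ l ∈ range (M + 1), expansionTerm R φ l j * (N * N⁻¹ ^ l) =
      N * ∑ k ∈ range (M + 1), taylorCoeff R φ k j * N⁻¹ ^ k +
        (2 * (j : ℂ) + 1) * ∑ k ∈ range M, taylorCoeff R φ k j * N⁻¹ ^ k := by
  have key := sum_range_succ_coeff_mul_pow (fun k => taylorCoeff R φ k j)
    (fun l => expansionTerm R φ l j) (2 * (j : ℂ) + 1) N⁻¹ rfl (fun _ => rfl) M
  simp only [mul_left_comm _ N, ← mul_sum, key]
  field_simp

theorem exists_norm_sub_sum_expansionTerm_le (hR : 0 < R) (M : ℕ) :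
    ∃ K, ∀ N : ℕ, 0 < N → ∀ j : ℕ,
      ‖((N : ℂ) + 2 * (j : ℂ) + 1) *
            φ ((1 / R ^ 2) * ((j : ℝ) * ((j : ℝ) + 1) / N + (2 * (j : ℝ) + 1) / 2)) -
          ∑ l ∈ range (M + 1), expansionTerm R φ l j * (((N : ℝ) ^ ((1 : ℝ) - (l : ℝ)) : ℝ) : ℂ)‖ ≤
        K / ((j : ℝ) + 1) ^ 2 / (N : ℝ) ^ M := by
  obtain ⟨C₁, hC₁0, hC₁⟩ := exists_norm_sub_sum_taylorCoeff_le φ hR (M + 1)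
  obtain ⟨C₂, hC₂0, hC₂⟩ := exists_norm_sub_sum_taylorCoeff_le φ hR M
  refine ⟨C₁ + 2 * C₂, fun N hN j => ?_⟩
  have hN₀ : (0 : ℝ) < N := by exact_mod_cast hN
  have hpow : ∀ l : ℕ, (((N : ℝ) ^ ((1 : ℝ) - (l : ℝ)) : ℝ) : ℂ) = N * (N : ℂ)⁻¹ ^ l := fun l => by
    rw [Real.rpow_sub hN₀, Real.rpow_one, Real.rpow_natCast]
    push_cast
    ring
  simp only [hpow, eigenvalue_div_eq]
  rw [sum_expansionTerm_mul φ j M (by exact_mod_cast hN.ne')]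
  set x := φ (landauLevel R j + levelShift R j / N)
  set T₁ := ∑ k ∈ range (M + 1), taylorCoeff R φ k j * (N : ℂ)⁻¹ ^ k
  set T₂ := ∑ k ∈ range M, taylorCoeff R φ k j * (N : ℂ)⁻¹ ^ k
  have hsplit : ((N : ℂ) + 2 * (j : ℂ) + 1) * x - (N * T₁ + (2 * (j : ℂ) + 1) * T₂) =
      N * (x - T₁) + (2 * (j : ℂ) + 1) * (x - T₂) := by ring
  have hj : (1 : ℝ) ≤ (j : ℝ) + 1 := by linarith [j.cast_nonneg (α := ℝ)]
  rw [hsplit]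
  calc _ ≤ N * ‖x - T₁‖ + (2 * (j : ℝ) + 1) * ‖x - T₂‖ := by
        refine (norm_add_le _ _).trans_eq ?_
        rw [norm_mul, norm_mul]
        norm_cast
    _ ≤ N * (C₁ / ((j : ℝ) + 1) ^ 3 / (N : ℝ) ^ (M + 1)) +
          (2 * (j : ℝ) + 1) * (C₂ / ((j : ℝ) + 1) ^ 3 / (N : ℝ) ^ M) := by
        gcongr
        · exact hC₁ N hN j
        · exact hC₂ N hN j
    _ = (C₁ / ((j : ℝ) + 1) ^ 3 + (2 * (j : ℝ) + 1) * (C₂ / ((j : ℝ) + 1) ^ (2 + 1))) /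
          (N : ℝ) ^ M := by
        field_simp
        ring
    _ ≤ (C₁ / ((j : ℝ) + 1) ^ 2 + 2 * C₂ / ((j : ℝ) + 1) ^ 2) / (N : ℝ) ^ M := by
        gcongr (?_ + ?_) / _
        · exact div_le_div_of_nonneg_left hC₁0 (by positivity) (pow_le_pow_right₀ hj (by norm_num))
        · exact two_mul_add_one_mul_div_pow_succ_le hC₂0 j 2
    _ = (C₁ + 2 * C₂) / ((j : ℝ) + 1) ^ 2 / (N : ℝ) ^ M := by ring

end

end MagneticSphere

open MagneticSphere

/-- `Y_N(φ)` admits an asymptotic expansion `Σ_l f_l(φ) N^{1-l}` with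
leading coefficient `f_0(φ) = Σ_j φ((2j+1)/(2R²))`. -/
theorem stmt8 (R : ℝ) (hR : 0 < R) (φ : SchwartzMap ℝ ℂ) :
    ∃ f : ℕ → ℂ,
      f 0 = ∑' j : ℕ, φ ((2 * (j : ℝ) + 1) / (2 * R ^ 2)) ∧
      ∀ M : ℕ, ∃ C : ℝ, ∀ N : ℕ, 1 ≤ N →
        ‖Ysphere R φ N -
            ∑ l ∈ Finset.range (M + 1), f l * (((N : ℝ) ^ ((1 : ℝ) - (l : ℝ)) : ℝ) : ℂ)‖ ≤
          C * (N : ℝ) ^ (-(M : ℝ)) := by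
  refine ⟨expansionCoeff R φ, expansionCoeff_zero R φ, fun M => ?_⟩
  obtain ⟨K, hK⟩ := exists_norm_sub_sum_expansionTerm_le φ hR M
  refine ⟨∑' j : ℕ, K / ((j : ℝ) + 1) ^ 2, fun N hN => ?_⟩
  have hterm : ∀ l ∈ range (M + 1), Summable fun j =>
      expansionTerm R φ l j * (((N : ℝ) ^ ((1 : ℝ) - (l : ℝ)) : ℝ) : ℂ) :=
    fun l _ => (summable_expansionTerm φ hR l).mul_right _
  calc _ = ‖Ysphere R φ N - ∑' j, ∑ l ∈ range (M + 1),
        expansionTerm R φ l j * (((N : ℝ) ^ ((1 : ℝ) - (l : ℝ)) : ℝ) : ℂ)‖ := by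
        rw [Summable.tsum_finsetSum hterm]
        simp only [expansionCoeff, tsum_mul_right]
    _ ≤ ∑' j : ℕ, K / ((j : ℝ) + 1) ^ 2 / (N : ℝ) ^ M :=
        norm_tsum_sub_tsum_le (summable_sum hterm)
          ((summable_div_natCast_add_one_sq K).div_const _) (hK N hN)
    _ = _ := by rw [tsum_div_const, Real.rpow_neg N.cast_nonneg, Real.rpow_natCast, div_eq_mul_inv]
end

section
/- Let φ ∈ 𝒮(ℝ) and a_j(N) = (1/R²)[(1/N)j(j+1) + (1/2)(2j+1)] for j ∈ ℤ_{≥0} and N ∈ ℕ. Then Σ_{j=0}^∞ φ(a_j(N)) = Σ_{j=0}^∞ φ((2j+1)/(2R²)) + O(1/N) as N → ∞; in particular the sums converge absolutely and the error is uniformly controlled. -/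
open Real

/-- Summability of `1/(j+1)^2`. -/
lemma aux_summable_u : Summable fun j : ℕ => 1 / ((j : ℝ) + 1) ^ 2 := by
  have h : Summable (fun n : ℕ => 1 / (n : ℝ) ^ 2) :=
    (Real.summable_one_div_nat_pow).mpr one_lt_two
  have := (summable_nat_add_iff 1).mpr h
  simpa using this

/-- with `a_j(N) = (1/R²)[j(j+1)/N + (2j+1)/2]`, the sums
`Σ_j φ(a_j(N))` and `Σ_j φ((2j+1)/(2R²))` converge absolutely, and
`Σ_j φ(a_j(N)) = Σ_j φ((2j+1)/(2R²)) + O(1/N)` as `N → ∞`. -/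
theorem stmt10 (R : ℝ) (hR : 0 < R) (φ : SchwartzMap ℝ ℂ) :
    (∀ N : ℕ, 1 ≤ N →
      Summable fun j : ℕ =>
        ‖φ ((1 / R ^ 2) * ((j : ℝ) * ((j : ℝ) + 1) / N + (2 * (j : ℝ) + 1) / 2))‖) ∧
    (Summable fun j : ℕ => ‖φ ((2 * (j : ℝ) + 1) / (2 * R ^ 2))‖) ∧
    (∃ C : ℝ, ∀ N : ℕ, 1 ≤ N →
      ‖(∑' j : ℕ, φ ((1 / R ^ 2) * ((j : ℝ) * ((j : ℝ) + 1) / N + (2 * (j : ℝ) + 1) / 2))) -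
          ∑' j : ℕ, φ ((2 * (j : ℝ) + 1) / (2 * R ^ 2))‖ ≤ C / N) := by
  have hR2 : (0:ℝ) < R ^ 2 := by positivity
  obtain ⟨C0, hC0p, hC0⟩ := φ.decay 2 0
  obtain ⟨C1, hC1p, hC1⟩ := φ.decay 4 1
  -- decay bounds at positive points
  have hφ0 : ∀ x : ℝ, 0 < x → ‖φ x‖ ≤ C0 / x ^ 2 := by
    intro x hx
    have h := hC0 x
    rw [norm_iteratedFDeriv_zero, Real.norm_eq_abs, abs_of_pos hx] at h
    rw [le_div_iff₀ (by positivity)]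
    linarith
  have hφ1 : ∀ x : ℝ, 0 < x → ‖fderiv ℝ φ x‖ ≤ C1 / x ^ 4 := by
    intro x hx
    have h := hC1 x
    have he : ‖iteratedFDeriv ℝ 1 (φ : ℝ → ℂ) x‖ = ‖fderiv ℝ (φ : ℝ → ℂ) x‖ := by
      rw [← norm_iteratedFDeriv_fderiv, norm_iteratedFDeriv_zero]
    rw [he, Real.norm_eq_abs, abs_of_pos hx] at h
    rw [le_div_iff₀ (by positivity)]
    linarith
  set b : ℕ → ℝ := fun j => (2 * (j : ℝ) + 1) / (2 * R ^ 2) with hb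
  have hbpos : ∀ j : ℕ, 0 < b j := by
    intro j
    have hj : (0:ℝ) ≤ (j:ℝ) := Nat.cast_nonneg j
    rw [hb]; positivity
  have hblow : ∀ j : ℕ, ((j : ℝ) + 1) / (2 * R ^ 2) ≤ b j := by
    intro j
    simp only [hb]
    have hj : (0:ℝ) ≤ (j:ℝ) := Nat.cast_nonneg j
    gcongr
    linarith
  -- generic pointwise norm bound for x ≥ (j+1)/(2R²)
  have key0 : ∀ (j : ℕ) (x : ℝ), ((j : ℝ) + 1) / (2 * R ^ 2) ≤ x →
      ‖φ x‖ ≤ (4 * C0 * R ^ 4) * (1 / ((j : ℝ) + 1) ^ 2) := by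
    intro j x hx
    have hj1 : (0:ℝ) < (j:ℝ) + 1 := by positivity
    have hxpos : 0 < x := lt_of_lt_of_le (by positivity) hx
    refine (hφ0 x hxpos).trans ?_
    have h2 : C0 / x ^ 2 ≤ C0 / (((j : ℝ) + 1) / (2 * R ^ 2)) ^ 2 := by
      gcongr
    refine h2.trans_eq ?_
    field_simp
    ring
  have harg : ∀ (N : ℕ), 1 ≤ N → ∀ j : ℕ,
      (1 / R ^ 2) * ((j : ℝ) * ((j : ℝ) + 1) / N + (2 * (j : ℝ) + 1) / 2)
        = b j + (j : ℝ) * ((j : ℝ) + 1) / (N * R ^ 2) := by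
    intro N hN j
    have hN0 : (N : ℝ) ≠ 0 := Nat.cast_ne_zero.mpr (by omega)
    rw [hb]
    field_simp
    ring
  -- summability statements
  have hsum1 : ∀ N : ℕ, 1 ≤ N →
      Summable fun j : ℕ =>
        ‖φ ((1 / R ^ 2) * ((j : ℝ) * ((j : ℝ) + 1) / N + (2 * (j : ℝ) + 1) / 2))‖ := by
    intro N hN
    refine Summable.of_nonneg_of_le (fun j => norm_nonneg _) (fun j => ?_)
      (aux_summable_u.mul_left (4 * C0 * R ^ 4))
    apply key0
    rw [harg N hN j]
    have hN0 : (0:ℝ) < (N : ℝ) := by exact_mod_cast Nat.pos_of_ne_zero (by omega)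
    have h1 : (0:ℝ) ≤ (j : ℝ) * ((j : ℝ) + 1) / (N * R ^ 2) := by positivity
    linarith [hblow j]
  have hsum2 : Summable fun j : ℕ => ‖φ ((2 * (j : ℝ) + 1) / (2 * R ^ 2))‖ := by
    refine Summable.of_nonneg_of_le (fun j => norm_nonneg _) (fun j => ?_)
      (aux_summable_u.mul_left (4 * C0 * R ^ 4))
    exact key0 j _ (hblow j)
  refine ⟨hsum1, hsum2, ?_⟩
  -- the O(1/N) bound
  set E : ℝ := 16 * C1 * R ^ 6 with hE
  have hEpos : 0 < E := by rw [hE]; positivity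
  set T : ℝ := ∑' j : ℕ, 1 / ((j : ℝ) + 1) ^ 2 with hT
  have hTnn : 0 ≤ T := tsum_nonneg fun j => by positivity
  refine ⟨E * T, ?_⟩
  intro N hN
  have hN0 : (0:ℝ) < (N : ℝ) := by exact_mod_cast Nat.pos_of_ne_zero (by omega)
  set a : ℕ → ℝ := fun j =>
    (1 / R ^ 2) * ((j : ℝ) * ((j : ℝ) + 1) / N + (2 * (j : ℝ) + 1) / 2) with ha
  -- per-term difference bound
  have hdiff : ∀ j : ℕ, ‖φ (a j) - φ (b j)‖ ≤ E / N * (1 / ((j : ℝ) + 1) ^ 2) := by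
    intro j
    have hj0 : (0:ℝ) ≤ (j:ℝ) := Nat.cast_nonneg j
    have hab : a j = b j + (j : ℝ) * ((j : ℝ) + 1) / (N * R ^ 2) := harg N hN j
    have hba : b j ≤ a j := by
      rw [hab]
      have : (0:ℝ) ≤ (j : ℝ) * ((j : ℝ) + 1) / (N * R ^ 2) := by positivity
      linarith
    have hmvt : ‖φ (a j) - φ (b j)‖ ≤ (C1 / (b j) ^ 4) * ‖a j - b j‖ := by
      refine Convex.norm_image_sub_le_of_norm_fderiv_le
        (fun x _ => φ.differentiableAt) (fun x hx => ?_) (convex_Icc (b j) (a j))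
        ⟨le_refl _, hba⟩ ⟨hba, le_refl _⟩
      have hxb : b j ≤ x := hx.1
      have hxpos : 0 < x := lt_of_lt_of_le (hbpos j) hxb
      refine (hφ1 x hxpos).trans ?_
      gcongr
    have hnormab : ‖a j - b j‖ = (j : ℝ) * ((j : ℝ) + 1) / (N * R ^ 2) := by
      rw [hab]
      simp only [add_sub_cancel_left]
      rw [Real.norm_eq_abs, abs_of_nonneg (by positivity)]
    refine hmvt.trans ?_
    rw [hnormab]
    have h2j : (0:ℝ) < 2 * (j:ℝ) + 1 := by positivity
    have hLHS : C1 / (b j) ^ 4 * ((j : ℝ) * ((j : ℝ) + 1) / (N * R ^ 2))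
        = E / N * ((j : ℝ) * ((j : ℝ) + 1) / (2 * (j : ℝ) + 1) ^ 4) := by
      rw [hb, hE]
      field_simp
      ring
    rw [hLHS]
    have hfrac : (j : ℝ) * ((j : ℝ) + 1) / (2 * (j : ℝ) + 1) ^ 4
        ≤ 1 / ((j : ℝ) + 1) ^ 2 := by
      rw [div_le_div_iff₀ (by positivity) (by positivity)]
      nlinarith [sq_nonneg ((j:ℝ)), sq_nonneg ((j:ℝ) * (j:ℝ)), sq_nonneg ((j:ℝ)+1)]
    exact mul_le_mul_of_nonneg_left hfrac (by positivity)
  -- assemble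
  have hsa : Summable fun j : ℕ => φ (a j) := (hsum1 N hN).of_norm
  have hsb : Summable fun j : ℕ => φ (b j) := hsum2.of_norm
  have hsumd : Summable fun j : ℕ => ‖φ (a j) - φ (b j)‖ :=
    Summable.of_nonneg_of_le (fun j => norm_nonneg _) hdiff
      (aux_summable_u.mul_left (E / N))
  have main : ‖(∑' j : ℕ, φ (a j)) - ∑' j : ℕ, φ (b j)‖ ≤ E * T / N := by
    calc ‖(∑' j : ℕ, φ (a j)) - ∑' j : ℕ, φ (b j)‖
        = ‖∑' j : ℕ, (φ (a j) - φ (b j))‖ := by rw [Summable.tsum_sub hsa hsb]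
      _ ≤ ∑' j : ℕ, ‖φ (a j) - φ (b j)‖ := norm_tsum_le_tsum_norm hsumd
      _ ≤ ∑' j : ℕ, E / N * (1 / ((j : ℝ) + 1) ^ 2) :=
          Summable.tsum_le_tsum hdiff hsumd (aux_summable_u.mul_left (E / N))
      _ = E / N * T := tsum_mul_left
      _ = E * T / N := by ring
  exact main
end

section
/- Fix n ∈ ℕ and a_1,…,a_n > 0, V ∈ ℝ. Define Λ_k = Σ_{j=1}^n (2k_j+1)a_j + V for k ∈ ℤ_+^n. Then for any φ ∈ 𝒮(ℝ), the series Σ_{k∈ℤ_+^n} |φ(Λ_k)| converges, and f_0 = (1/(2π)^n)(∏_j a_j) Σ_{k∈ℤ_+^n} φ(Λ_k) equals (1/(-4iπ)^n)(∏_j a_j)·(1/2π)⟨e^{itV}/∏_{j=1}^n sin(a_j(t+i0)), φ̂(t)⟩. -/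
open MeasureTheory Filter Topology Real

open FourierTransform
open scoped RealInnerProductSpace


/-- Product of `n` absolutely convergent series, indexed by `Fin n → ℕ`. -/
lemma aux_pi_hasSum {𝕜 : Type*} [RCLike 𝕜] {n : ℕ} (f : Fin n → ℕ → 𝕜)
    (h : ∀ j, Summable fun m => ‖f j m‖) :
    HasSum (fun k : Fin n → ℕ => ∏ j, f j (k j)) (∏ j, ∑' m, f j m) ∧
    Summable (fun k : Fin n → ℕ => ‖∏ j, f j (k j)‖) := by
  induction n with
  | zero =>
      have h1 : (fun k : Fin 0 → ℕ => ∏ j, f j (k j)) = fun _ => (1 : 𝕜) := by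
        funext k; simp
      have h2 : HasSum (fun _ : Fin 0 → ℕ => (1:𝕜)) 1 :=
        hasSum_single default (fun b hb => (hb (Subsingleton.elim _ _)).elim)
      constructor
      · rw [h1]; simpa using h2
      · have h3 : HasSum (fun _ : Fin 0 → ℕ => ‖(1:𝕜)‖) ‖(1:𝕜)‖ :=
          hasSum_single default (fun b hb => (hb (Subsingleton.elim _ _)).elim)
        simp only [Finset.univ_eq_empty, Finset.prod_empty]
        exact ⟨_, h3⟩
  | succ n ih =>
      obtain ⟨ih1, ih2⟩ := ih (fun j => f j.succ) (fun j => h j.succ)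
      set F : (Fin n → ℕ) → 𝕜 := fun k => ∏ j, f j.succ (k j) with hF
      have h0 : HasSum (f 0) (∑' m, f 0 m) := (Summable.of_norm (h 0)).hasSum
      have hmulnorm : Summable fun p : ℕ × (Fin n → ℕ) => ‖f 0 p.1 * F p.2‖ :=
        Summable.mul_norm (h 0) ih2
      have hmul : HasSum (fun p : ℕ × (Fin n → ℕ) => f 0 p.1 * F p.2)
          ((∑' m, f 0 m) * ∏ j : Fin n, ∑' m, f j.succ m) :=
        h0.mul ih1 (Summable.of_norm hmulnorm)
      set e : ℕ × (Fin n → ℕ) ≃ (Fin (n+1) → ℕ) := Fin.consEquiv (fun _ => ℕ) with he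
      have hcomp : ∀ p : ℕ × (Fin n → ℕ), (∏ j, f j (e p j)) = f 0 p.1 * F p.2 := by
        intro p
        rw [Fin.prod_univ_succ]
        simp [he, Fin.consEquiv, hF]
      have hfun : ((fun k : Fin (n+1) → ℕ => ∏ j, f j (k j)) ∘ e)
          = fun p : ℕ × (Fin n → ℕ) => f 0 p.1 * F p.2 := by
        funext p; exact hcomp p
      have hfun2 : ((fun k : Fin (n+1) → ℕ => ‖∏ j, f j (k j)‖) ∘ e)
          = fun p : ℕ × (Fin n → ℕ) => ‖f 0 p.1 * F p.2‖ := by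
        funext p; exact congrArg norm (hcomp p)
      constructor
      · have := (Equiv.hasSum_iff e (f := fun k : Fin (n+1) → ℕ => ∏ j, f j (k j))).mp
          (by rw [hfun]; exact hmul)
        rwa [Fin.prod_univ_succ]
      · exact (Equiv.summable_iff e
          (f := fun k : Fin (n+1) → ℕ => ‖∏ j, f j (k j)‖)).mp (by rw [hfun2]; exact hmulnorm)


lemma exp_split (μ t ε : ℝ) :
    Complex.exp (Complex.I * μ * ((t:ℂ) + Complex.I * ε))
      = (Real.exp (-(ε * μ)) : ℂ) * Complex.exp (Complex.I * μ * t) := by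
  rw [Complex.ofReal_exp, ← Complex.exp_add]
  congr 1
  push_cast
  linear_combination (μ:ℂ) * (ε:ℂ) * Complex.I_sq

lemma norm_exp_I_mul (μ t ε : ℝ) :
    ‖Complex.exp (Complex.I * μ * ((t:ℂ) + Complex.I * ε))‖ = Real.exp (-(ε * μ)) := by
  rw [exp_split, norm_mul, Complex.norm_real, Real.norm_eq_abs, abs_of_pos (Real.exp_pos _)]
  have : Complex.I * μ * t = ((μ * t : ℝ) : ℂ) * Complex.I := by push_cast; ring
  rw [this, Complex.norm_exp_ofReal_mul_I, mul_one]

/-- geometric expansion of `1/sin` in the upper half-plane -/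
lemma sin_inv_hasSum {a ε : ℝ} (ha : 0 < a) (hε : 0 < ε) (t : ℝ) :
    HasSum (fun m : ℕ =>
      Complex.exp (Complex.I * ((2 * (m:ℝ) + 1) * a : ℝ) * ((t:ℂ) + Complex.I * ε)))
      (Complex.I / 2 * (Complex.sin ((a:ℂ) * ((t:ℂ) + Complex.I * ε)))⁻¹) := by
  set z : ℂ := (t:ℂ) + Complex.I * ε with hz
  set w : ℂ := Complex.exp (Complex.I * a * z) with hw
  set r : ℂ := Complex.exp (Complex.I * ((2*a : ℝ)) * z) with hr
  have hwr : r = w * w := by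
    rw [hw, hr, ← Complex.exp_add]; congr 1; push_cast; ring
  have hrnorm : ‖r‖ < 1 := by
    rw [hr, norm_exp_I_mul]
    exact Real.exp_lt_one_iff.mpr (by nlinarith)
  have hgeo : HasSum (fun m : ℕ => w * r ^ m) (w * (1 - r)⁻¹) :=
    (hasSum_geometric_of_norm_lt_one hrnorm).mul_left w
  have hterm : ∀ m : ℕ,
      Complex.exp (Complex.I * ((2 * (m:ℝ) + 1) * a : ℝ) * z) = w * r ^ m := by
    intro m
    rw [hw, hr, ← Complex.exp_nat_mul, ← Complex.exp_add]
    congr 1; push_cast; ring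
  have hw0 : w ≠ 0 := Complex.exp_ne_zero _
  have hr1 : 1 - r ≠ 0 := by
    intro h0
    rw [sub_eq_zero] at h0
    rw [← h0] at hrnorm
    simp at hrnorm
  have hsin : Complex.sin ((a:ℂ) * z) = (w⁻¹ - w) * Complex.I / 2 := by
    rw [Complex.sin, hw, ← Complex.exp_neg]
    congr 3
    · congr 1; ring
    · congr 1; ring
  have h2 : (1 : ℂ) - w * w ≠ 0 := by rwa [hwr] at hr1
  have hinv : w⁻¹ - w = (1 - w * w) * w⁻¹ := by field_simp
  have hs0 : (w⁻¹ - w) * Complex.I / 2 ≠ 0 := by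
    rw [hinv]
    exact div_ne_zero (mul_ne_zero (mul_ne_zero h2 (inv_ne_zero hw0)) Complex.I_ne_zero)
      two_ne_zero
  have hval : w * (1 - r)⁻¹ = Complex.I / 2 * (Complex.sin ((a:ℂ) * z))⁻¹ := by
    rw [hsin, hwr, ← div_eq_mul_inv, ← div_eq_mul_inv, div_eq_div_iff h2 hs0]
    field_simp
  rw [← hval]
  have hfun : (fun m : ℕ =>
      Complex.exp (Complex.I * ((2 * (m:ℝ) + 1) * a : ℝ) * z)) = fun m => w * r ^ m :=
    funext hterm
  rw [hfun]
  exact hgeo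

lemma fourierT_eq (φ : SchwartzMap ℝ ℂ) (k : ℝ) :
    fourierT φ k = 𝓕 (φ : ℝ → ℂ) (k / (2 * π)) := by
  rw [Real.fourier_eq']
  unfold fourierT
  congr 1
  funext l
  rw [smul_eq_mul, mul_comm]
  congr 1
  rw [RCLike.inner_apply, starRingEnd_apply, star_trivial]
  congr 1
  have hπ : (π : ℂ) ≠ 0 := by
    simpa using Complex.ofReal_ne_zero.mpr Real.pi_ne_zero
  push_cast
  field_simp

lemma fourierT_integrable (φ : SchwartzMap ℝ ℂ) : Integrable (fourierT φ) := by
  have h : fourierT φ = fun t => (SchwartzMap.fourierTransformCLM ℂ φ) (t / (2 * π)) := by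
    funext t
    rw [fourierT_eq, SchwartzMap.fourierTransformCLM_apply, SchwartzMap.fourier_coe]
  rw [h]
  exact (SchwartzMap.integrable (SchwartzMap.fourierTransformCLM ℂ φ)).comp_div
    (by positivity)

lemma fourierT_continuous (φ : SchwartzMap ℝ ℂ) : Continuous (fourierT φ) := by
  have h : fourierT φ = fun t => (SchwartzMap.fourierTransformCLM ℂ φ) (t / (2 * π)) := by
    funext t
    rw [fourierT_eq, SchwartzMap.fourierTransformCLM_apply, SchwartzMap.fourier_coe]
  rw [h]
  exact (SchwartzMap.fourierTransformCLM ℂ φ).continuous.comp (continuous_id.div_const _)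

lemma fourierT_inversion (φ : SchwartzMap ℝ ℂ) (lam : ℝ) :
    ∫ t : ℝ, fourierT φ t * Complex.exp (Complex.I * t * lam) = 2 * π * φ lam := by
  have hπ : (2 * π : ℝ) ≠ 0 := by positivity
  set g : ℝ → ℂ := fun u => 𝓕 (φ : ℝ → ℂ) u *
    Complex.exp ((↑(2 * π * (u * lam)) : ℂ) * Complex.I) with hg
  have h1 : ∀ t : ℝ, fourierT φ t * Complex.exp (Complex.I * t * lam) = g (t / (2 * π)) := by
    intro t
    rw [hg, fourierT_eq]
    have h5 : 2 * π * (t / (2 * π) * lam) = t * lam := by field_simp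
    show _ = 𝓕 (⇑φ) (t / (2 * π)) * Complex.exp ((↑(2 * π * (t / (2 * π) * lam)) : ℂ) * Complex.I)
    rw [h5]
    congr 1
    push_cast
    ring
  calc ∫ t : ℝ, fourierT φ t * Complex.exp (Complex.I * t * lam)
      = ∫ t : ℝ, g (t / (2 * π)) := by simp_rw [h1]
    _ = |2 * π| • ∫ u, g u := MeasureTheory.Measure.integral_comp_div g (2 * π)
    _ = 2 * π * φ lam := by
        have h2 : ∫ u, g u = 𝓕⁻ (𝓕 (φ : ℝ → ℂ)) lam := by
          rw [Real.fourierInv_eq']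
          congr 1
          funext u
          rw [smul_eq_mul, mul_comm]
          rw [hg, RCLike.inner_apply, starRingEnd_apply, star_trivial, mul_comm lam u]
        have h3 : Integrable (𝓕 (φ : ℝ → ℂ)) := by
          exact SchwartzMap.integrable (SchwartzMap.fourierTransformCLM ℂ φ)
        have h4 := Continuous.fourierInv_fourier_eq φ.continuous φ.integrable h3
        rw [h2, h4, abs_of_pos (by positivity : (0:ℝ) < 2 * π)]
        rw [Complex.real_smul]
        push_cast
        ring


lemma summable_phi (n : ℕ) (a : Fin n → ℝ) (ha : ∀ j, 0 < a j) (V : ℝ)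
    (φ : SchwartzMap ℝ ℂ) :
    Summable fun k : Fin n → ℕ => ‖φ (∑ j, (2 * (k j : ℝ) + 1) * a j + V)‖ := by
  obtain ⟨δ, hδ0, hδle⟩ : ∃ δ : ℝ, 0 < δ ∧ ∀ j, δ ≤ a j := by
    rcases isEmpty_or_nonempty (Fin n) with hemp | hne
    · exact ⟨1, one_pos, fun j => isEmptyElim j⟩
    · obtain ⟨j0, -, hj0⟩ := Finset.exists_min_image Finset.univ a
        ⟨Classical.arbitrary _, Finset.mem_univ _⟩
      exact ⟨a j0, ha j0, fun j => hj0 j (Finset.mem_univ j)⟩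
  obtain ⟨C, hC0, hC⟩ := φ.decay (2 * n) 0
  
  -- the comparison series
  have hbase : Summable (fun m : ℕ => ‖((1 + (m:ℝ)) ^ 2)⁻¹‖) := by
    have h1 : Summable (fun m : ℕ => 1 / ((m : ℝ)) ^ 2) :=
      summable_one_div_nat_pow.mpr one_lt_two
    have h2 : Summable (fun m : ℕ => 1 / (((m + 1 : ℕ)) : ℝ) ^ 2) :=
      (summable_nat_add_iff (f := fun m : ℕ => 1 / (m : ℝ) ^ 2) 1).mpr h1
    apply h2.congr
    intro m
    rw [Real.norm_eq_abs, abs_of_nonneg (by positivity)]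
    push_cast
    rw [one_div, add_comm]
  have hG : Summable (fun k : Fin n → ℕ => ‖∏ j, ((1 + (k j : ℝ)) ^ 2)⁻¹‖) :=
    (aux_pi_hasSum (𝕜 := ℝ) (fun _ m => ((1 + (m:ℝ)) ^ 2)⁻¹) (fun _ => hbase)).2
  obtain ⟨N, hN⟩ := exists_nat_ge ((δ + |V|) / δ)
  set g : (Fin n → ℕ) → ℝ :=
    fun k => (C / δ ^ (2 * n)) * ‖∏ j, ((1 + (k j : ℝ)) ^ 2)⁻¹‖ with hg
  have hgsum : Summable g := hG.mul_left _
  -- main pointwise estimate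
  have hmain : ∀ k : Fin n → ℕ, N ≤ ∑ j, k j →
      ‖φ (∑ j, (2 * (k j : ℝ) + 1) * a j + V)‖ ≤ g k := by
    intro k hk
    set S : ℝ := ∑ j, (k j : ℝ) with hS
    have hS0 : 0 ≤ S := Finset.sum_nonneg fun j _ => Nat.cast_nonneg _
    have hkS : ∀ j, (k j : ℝ) ≤ S := fun j =>
      Finset.single_le_sum (f := fun j => (k j : ℝ)) (fun i _ => Nat.cast_nonneg _)
        (Finset.mem_univ j)
    have hNS : ((N : ℝ)) ≤ S := by
      rw [hS]
      push_cast
      exact_mod_cast Nat.cast_le.mpr hk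
    have hδS : δ + |V| ≤ δ * S := by
      have := hN.trans hNS
      rw [div_le_iff₀ hδ0] at this
      linarith
    set Λ : ℝ := ∑ j, (2 * (k j : ℝ) + 1) * a j + V with hΛ
    have hμ : 2 * (δ * S) ≤ ∑ j, (2 * (k j : ℝ) + 1) * a j := by
      have : ∀ j ∈ Finset.univ, 2 * δ * (k j : ℝ) ≤ (2 * (k j : ℝ) + 1) * a j := by
        intro j _
        have h1 := hδle j
        have h2 := (ha j).le
        have h3 : (0:ℝ) ≤ (k j : ℝ) := Nat.cast_nonneg _
        nlinarith
      calc 2 * (δ * S) = ∑ j, 2 * δ * (k j : ℝ) := by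
            rw [hS, Finset.mul_sum, Finset.mul_sum]
            exact Finset.sum_congr rfl fun j _ => by ring
        _ ≤ _ := Finset.sum_le_sum this
    have hΛge : δ * (1 + S) ≤ Λ := by
      have hV : -|V| ≤ V := neg_abs_le V
      rw [hΛ]
      nlinarith
    have hΛpos : 0 < Λ := lt_of_lt_of_le (by positivity) hΛge
    -- decay bound
    have hdecay := hC Λ
    rw [norm_iteratedFDeriv_zero] at hdecay
    have hΛnorm : ‖Λ‖ = Λ := by rw [Real.norm_eq_abs, abs_of_pos hΛpos]
    rw [hΛnorm] at hdecay
    have hpowle : (δ * (1 + S)) ^ (2 * n) * ‖φ Λ‖ ≤ Λ ^ (2 * n) * ‖φ Λ‖ := by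
      apply mul_le_mul_of_nonneg_right _ (norm_nonneg _)
      exact pow_le_pow_left₀ (by positivity) hΛge _
    have hbound : ‖φ Λ‖ ≤ C / (δ * (1 + S)) ^ (2 * n) := by
      rw [le_div_iff₀ (by positivity)]
      calc ‖φ Λ‖ * (δ * (1 + S)) ^ (2 * n)
          = (δ * (1 + S)) ^ (2 * n) * ‖φ Λ‖ := by ring
        _ ≤ Λ ^ (2 * n) * ‖φ Λ‖ := hpowle
        _ ≤ C := hdecay
    have hprodle : ∏ j, (1 + (k j : ℝ)) ^ 2 ≤ (1 + S) ^ (2 * n) := by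
      have h1 : (1 + S) ^ (2 * n) = ∏ _j : Fin n, (1 + S) ^ 2 := by
        rw [Finset.prod_const, Finset.card_univ, Fintype.card_fin, ← pow_mul]
        
      rw [h1]
      apply Finset.prod_le_prod (fun j _ => by positivity)
      intro j _
      have := hkS j
      nlinarith
    have hinv : ((1 + S) ^ (2 * n))⁻¹ ≤ ∏ j, ((1 + (k j : ℝ)) ^ 2)⁻¹ := by
      rw [Finset.prod_inv_distrib]
      exact inv_anti₀ (by positivity) hprodle
    calc ‖φ Λ‖ ≤ C / (δ * (1 + S)) ^ (2 * n) := hbound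
      _ = (C / δ ^ (2 * n)) * ((1 + S) ^ (2 * n))⁻¹ := by
          rw [mul_pow, div_mul_eq_div_div, div_eq_mul_inv]
      _ ≤ (C / δ ^ (2 * n)) * ∏ j, ((1 + (k j : ℝ)) ^ 2)⁻¹ := by
          apply mul_le_mul_of_nonneg_left hinv (by positivity)
      _ = g k := by
          simp only [hg]
          rw [Real.norm_eq_abs, abs_of_nonneg (Finset.prod_nonneg fun j _ => by positivity)]
  apply Summable.of_norm_bounded_eventually hgsum
  rw [Filter.eventually_cofinite]
  apply Set.Finite.subset (Set.Finite.pi (fun _ : Fin n => Set.finite_Iio N))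
  intro k hk
  simp only [Set.mem_setOf_eq] at hk
  have hlt : ∑ j, k j < N := by
    by_contra hge
    exact hk (by rw [norm_norm]; exact hmain k (le_of_not_gt hge))
  intro j _
  exact lt_of_le_of_lt (Finset.single_le_sum (f := fun j => k j) (fun _ _ => Nat.zero_le _)
    (Finset.mem_univ j)) hlt


lemma norm_exp_I_mul_real (v t : ℝ) : ‖Complex.exp (Complex.I * t * v)‖ = 1 := by
  have h : Complex.I * t * v = ((t * v : ℝ) : ℂ) * Complex.I := by push_cast; ring
  rw [h, Complex.norm_exp_ofReal_mul_I]


/-- with `Λ_k = Σ_j (2k_j+1)a_j + V`, the Landau-level sum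
`Σ_{k∈ℤ_+^n} φ(Λ_k)` converges absolutely, and
`(1/(2π)^n)(∏ a_j) Σ_k φ(Λ_k)
  = (1/(-4iπ))^n (∏ a_j) (1/2π) ⟨e^{itV}/∏_j sin(a_j(t+i0)), φ̂⟩`. -/
theorem stmt19 (n : ℕ) (a : Fin n → ℝ) (ha : ∀ j, 0 < a j) (V : ℝ)
    (φ : SchwartzMap ℝ ℂ) :
    (Summable fun k : Fin n → ℕ =>
      ‖φ (∑ j, (2 * (k j : ℝ) + 1) * a j + V)‖) ∧
    Tendsto
      (fun ε : ℝ =>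
        (1 / (-4 * Complex.I * (π : ℂ))) ^ n * (∏ j, (a j : ℂ)) * (1 / (2 * (π : ℂ))) *
          ∫ t : ℝ, fourierT φ t * Complex.exp (Complex.I * t * V) /
            ∏ j, Complex.sin ((a j : ℂ) * ((t : ℂ) + Complex.I * ε)))
      (𝓝[>] (0 : ℝ))
      (𝓝 ((1 / (2 * (π : ℂ))) ^ n * (∏ j, (a j : ℂ)) *
        ∑' k : Fin n → ℕ, φ (∑ j, (2 * (k j : ℝ) + 1) * a j + V))) := by

  have hsum := summable_phi n a ha V φ
  refine ⟨hsum, ?_⟩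
  set μ : (Fin n → ℕ) → ℝ := fun k => ∑ j, (2 * (k j : ℝ) + 1) * a j with hμdef
  set Λ : (Fin n → ℕ) → ℝ := fun k => (∑ j, (2 * (k j : ℝ) + 1) * a j) + V with hΛdef
  have hΛμ : ∀ k, Λ k = μ k + V := fun k => rfl
  have hμ0 : ∀ k, 0 ≤ μ k := by
    intro k
    apply Finset.sum_nonneg
    intro j _
    have := (ha j).le
    positivity
  have hπc : ((π : ℂ)) ≠ 0 := by
    simpa using Complex.ofReal_ne_zero.mpr Real.pi_ne_zero
  have h2πc : (2 * (π : ℂ)) ≠ 0 := by simp [hπc]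
  -- Step A : exact formula for positive ε
  have hA : ∀ ε : ℝ, 0 < ε →
      ((1 / (-4 * Complex.I * (π : ℂ))) ^ n * (∏ j, (a j : ℂ)) * (1 / (2 * (π : ℂ))) *
          ∫ t : ℝ, fourierT φ t * Complex.exp (Complex.I * t * V) /
            ∏ j, Complex.sin ((a j : ℂ) * ((t : ℂ) + Complex.I * ε)))
        = (1 / (2 * (π : ℂ))) ^ n * (∏ j, (a j : ℂ)) *
            ∑' k : Fin n → ℕ, (Real.exp (-(ε * μ k)) : ℂ) * φ (Λ k) := by
    intro ε hε
    set G : (Fin n → ℕ) → ℝ → ℂ := fun k t =>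
      Complex.exp (Complex.I * t * V) *
        Complex.exp (Complex.I * (μ k) * ((t : ℂ) + Complex.I * ε)) * fourierT φ t with hGdef
    have hGnorm : ∀ k t, ‖G k t‖ = Real.exp (-(ε * μ k)) * ‖fourierT φ t‖ := by
      intro k t
      rw [hGdef]
      simp only
      rw [norm_mul, norm_mul, norm_exp_I_mul_real, one_mul, norm_exp_I_mul]
    -- summability of the individual geometric series
    have hs : ∀ t : ℝ, ∀ j : Fin n, Summable fun m : ℕ =>
        ‖Complex.exp (Complex.I * ((2 * (m : ℝ) + 1) * a j : ℝ) * ((t : ℂ) + Complex.I * ε))‖ := by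
      intro t j
      apply Summable.congr
        (f := fun m : ℕ => Real.exp (-(ε * a j)) * (Real.exp (-(ε * (2 * a j)))) ^ m)
      · exact (summable_geometric_of_lt_one (Real.exp_nonneg _)
          (Real.exp_lt_one_iff.mpr (by nlinarith [ha j]))).mul_left _
      · intro m
        rw [norm_exp_I_mul, ← Real.exp_nat_mul, ← Real.exp_add]
        congr 1
        ring
    -- the product expansion
    have hterm : ∀ t : ℝ, ∀ k : Fin n → ℕ,
        (∏ j, Complex.exp (Complex.I * ((2 * (k j : ℝ) + 1) * a j : ℝ)
          * ((t : ℂ) + Complex.I * ε)))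
          = Complex.exp (Complex.I * (μ k) * ((t : ℂ) + Complex.I * ε)) := by
      intro t k
      rw [← Complex.exp_sum]
      congr 1
      have hcast : ((μ k : ℝ) : ℂ) = ∑ j, (((2 * (k j : ℝ) + 1) * a j : ℝ) : ℂ) := by
        rw [hμdef]; push_cast; rfl
      rw [hcast, Finset.mul_sum, Finset.sum_mul]
    have hprod := fun t : ℝ => aux_pi_hasSum (𝕜 := ℂ)
      (fun j m => Complex.exp (Complex.I * ((2 * (m : ℝ) + 1) * a j : ℝ)
        * ((t : ℂ) + Complex.I * ε))) (hs t)
    have hSum : ∀ t : ℝ, HasSum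
        (fun k : Fin n → ℕ => Complex.exp (Complex.I * (μ k) * ((t : ℂ) + Complex.I * ε)))
        ((Complex.I / 2) ^ n *
          ∏ j, (Complex.sin ((a j : ℂ) * ((t : ℂ) + Complex.I * ε)))⁻¹) := by
      intro t
      have h1 := (hprod t).1
      simp only [hterm t] at h1
      have hval : (∏ j, ∑' m : ℕ, Complex.exp (Complex.I * ((2 * (m : ℝ) + 1) * a j : ℝ)
          * ((t : ℂ) + Complex.I * ε)))
          = (Complex.I / 2) ^ n *
            ∏ j, (Complex.sin ((a j : ℂ) * ((t : ℂ) + Complex.I * ε)))⁻¹ := by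
        calc (∏ j, ∑' m : ℕ, Complex.exp (Complex.I * ((2 * (m : ℝ) + 1) * a j : ℝ)
              * ((t : ℂ) + Complex.I * ε)))
            = ∏ j, (Complex.I / 2 *
                (Complex.sin ((a j : ℂ) * ((t : ℂ) + Complex.I * ε)))⁻¹) :=
              Finset.prod_congr rfl fun j _ => (sin_inv_hasSum (ha j) hε t).tsum_eq
          _ = _ := by
              rw [Finset.prod_mul_distrib, Finset.prod_const, Finset.card_univ,
                Fintype.card_fin]
      rwa [hval] at h1
    have hexp_summ : Summable fun k : Fin n → ℕ => Real.exp (-(ε * μ k)) := by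
      have h2 := (hprod 0).2
      simp only [hterm 0] at h2
      apply h2.congr
      intro k
      rw [norm_exp_I_mul]
    -- pointwise identity for the integrand
    have hpt : ∀ t : ℝ, fourierT φ t * Complex.exp (Complex.I * t * V) /
        ∏ j, Complex.sin ((a j : ℂ) * ((t : ℂ) + Complex.I * ε))
        = (-2 * Complex.I) ^ n * ∑' k : Fin n → ℕ, G k t := by
      intro t
      have hinv : (∏ j, Complex.sin ((a j : ℂ) * ((t : ℂ) + Complex.I * ε)))⁻¹
          = (-2 * Complex.I) ^ n * ∑' k : Fin n → ℕ,
              Complex.exp (Complex.I * (μ k) * ((t : ℂ) + Complex.I * ε)) := by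
        rw [(hSum t).tsum_eq, ← mul_assoc, ← mul_pow]
        have h1 : (-2 * Complex.I) * (Complex.I / 2) = 1 := by
          linear_combination -Complex.I_mul_I
        rw [h1, one_pow, one_mul, ← Finset.prod_inv_distrib]
      rw [div_eq_mul_inv, hinv, ← tsum_mul_left, ← tsum_mul_left, ← tsum_mul_left]
      apply tsum_congr
      intro k
      rw [hGdef]
      simp only
      ring
    -- integrability of each term
    have hGint : ∀ k, Integrable (G k) := by
      intro k
      apply (fourierT_integrable φ).bdd_mul (c := Real.exp (-(ε * μ k)))
      · apply Continuous.aestronglyMeasurable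
        fun_prop
      · refine Filter.Eventually.of_forall (fun t => ?_)
        rw [norm_mul, norm_exp_I_mul_real, one_mul, norm_exp_I_mul]
    have hGnormint : ∀ k, ∫ t : ℝ, ‖G k t‖ = Real.exp (-(ε * μ k)) * ∫ t : ℝ, ‖fourierT φ t‖ := by
      intro k
      simp_rw [hGnorm k]
      exact integral_const_mul _ _
    have hGsumint : Summable fun k => ∫ t : ℝ, ‖G k t‖ := by
      simp_rw [hGnormint]
      exact hexp_summ.mul_right _
    -- value of each integral
    have hint_k : ∀ k, ∫ t : ℝ, G k t
        = (Real.exp (-(ε * μ k)) : ℂ) * (2 * π * φ (Λ k)) := by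
      intro k
      have h1 : ∀ t : ℝ, G k t = (Real.exp (-(ε * μ k)) : ℂ) *
          (fourierT φ t * Complex.exp (Complex.I * t * (Λ k))) := by
        intro t
        rw [hGdef]
        simp only
        rw [exp_split (μ k) t ε]
        have h2 : Complex.exp (Complex.I * t * V) * Complex.exp (Complex.I * (μ k) * t)
            = Complex.exp (Complex.I * t * (Λ k)) := by
          rw [← Complex.exp_add]
          congr 1
          rw [hΛμ k]
          push_cast
          ring
        calc Complex.exp (Complex.I * t * V) *
              ((Real.exp (-(ε * μ k)) : ℂ) * Complex.exp (Complex.I * (μ k) * t)) * fourierT φ t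
            = (Real.exp (-(ε * μ k)) : ℂ) * (fourierT φ t *
                (Complex.exp (Complex.I * t * V) * Complex.exp (Complex.I * (μ k) * t))) := by
              ring
          _ = _ := by rw [h2]
      simp_rw [h1]
      rw [integral_const_mul, fourierT_inversion]
    -- put everything together
    have hmeas : ∀ k, AEStronglyMeasurable (G k) (volume : Measure ℝ) := fun k => (hGint k).1
    have hinterchange : ∫ t : ℝ, ∑' k : Fin n → ℕ, G k t
        = ∑' k : Fin n → ℕ, ∫ t : ℝ, G k t :=
      (integral_tsum_of_summable_integral_norm hGint hGsumint).symm
    calc (1 / (-4 * Complex.I * (π : ℂ))) ^ n * (∏ j, (a j : ℂ)) * (1 / (2 * (π : ℂ))) *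
          ∫ t : ℝ, fourierT φ t * Complex.exp (Complex.I * t * V) /
            ∏ j, Complex.sin ((a j : ℂ) * ((t : ℂ) + Complex.I * ε))
        = (1 / (-4 * Complex.I * (π : ℂ))) ^ n * (∏ j, (a j : ℂ)) * (1 / (2 * (π : ℂ))) *
          ∫ t : ℝ, (-2 * Complex.I) ^ n * ∑' k : Fin n → ℕ, G k t := by
          congr 1
          exact integral_congr_ae (Filter.Eventually.of_forall hpt)
      _ = (1 / (-4 * Complex.I * (π : ℂ))) ^ n * (∏ j, (a j : ℂ)) * (1 / (2 * (π : ℂ))) *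
          ((-2 * Complex.I) ^ n * ∑' k : Fin n → ℕ, ∫ t : ℝ, G k t) := by
          rw [integral_const_mul, hinterchange]
      _ = (1 / (-4 * Complex.I * (π : ℂ))) ^ n * (∏ j, (a j : ℂ)) * (1 / (2 * (π : ℂ))) *
          ((-2 * Complex.I) ^ n * (2 * π *
            ∑' k : Fin n → ℕ, (Real.exp (-(ε * μ k)) : ℂ) * φ (Λ k))) := by
          congr 2
          rw [← tsum_mul_left]
          apply tsum_congr
          intro k
          rw [hint_k k]
          ring
      _ = ((1 / (-4 * Complex.I * (π : ℂ))) ^ n * (-2 * Complex.I) ^ n) * (∏ j, (a j : ℂ)) *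
          ((1 / (2 * (π : ℂ))) * (2 * (π : ℂ))) *
          ∑' k : Fin n → ℕ, (Real.exp (-(ε * μ k)) : ℂ) * φ (Λ k) := by
          ring
      _ = (1 / (2 * (π : ℂ))) ^ n * (∏ j, (a j : ℂ)) *
            ∑' k : Fin n → ℕ, (Real.exp (-(ε * μ k)) : ℂ) * φ (Λ k) := by
          have hc : (1 / (-4 * Complex.I * (π : ℂ))) ^ n * (-2 * Complex.I) ^ n
              = (1 / (2 * (π : ℂ))) ^ n := by
            rw [← mul_pow]
            congr 1
            rw [div_mul_eq_mul_div, div_eq_div_iff (by simp [Complex.I_ne_zero, hπc]) h2πc]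
            ring
          rw [hc, one_div_mul_cancel h2πc, mul_one]
  -- Step B : passage to the limit
  have hB : Tendsto (fun ε : ℝ => (1 / (2 * (π : ℂ))) ^ n * (∏ j, (a j : ℂ)) *
      ∑' k : Fin n → ℕ, (Real.exp (-(ε * μ k)) : ℂ) * φ (Λ k)) (𝓝[>] (0 : ℝ))
      (𝓝 ((1 / (2 * (π : ℂ))) ^ n * (∏ j, (a j : ℂ)) *
        ∑' k : Fin n → ℕ, φ (∑ j, (2 * (k j : ℝ) + 1) * a j + V))) := by
    apply Tendsto.const_mul
    apply tendsto_tsum_of_dominated_convergence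
      (bound := fun k : Fin n → ℕ => ‖φ (∑ j, (2 * (k j : ℝ) + 1) * a j + V)‖) hsum
    · intro k
      have hcont : Continuous fun ε : ℝ => ((Real.exp (-(ε * μ k)) : ℝ) : ℂ) * φ (Λ k) := by
        fun_prop
      have h0 := hcont.tendsto 0
      simp only [zero_mul, neg_zero, Real.exp_zero, Complex.ofReal_one, one_mul] at h0
      exact h0.mono_left nhdsWithin_le_nhds
    · filter_upwards [self_mem_nhdsWithin] with ε hε k
      have hε' : 0 < ε := hε
      rw [norm_mul, Complex.norm_real, Real.norm_eq_abs,
        abs_of_pos (Real.exp_pos _)]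
      have h1 : Real.exp (-(ε * μ k)) ≤ 1 := Real.exp_le_one_iff.mpr (by nlinarith [hμ0 k])
      exact mul_le_of_le_one_left (norm_nonneg _) h1
  refine Tendsto.congr' ?_ hB
  filter_upwards [self_mem_nhdsWithin] with ε hε
  exact (hA ε hε).symm
end
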